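/- arXiv:2012.11162 — 2 statements merged into one kernel-verified Lean document; each statement's English description precedes it below -/
import Mathlib

section
/- Let G be a simple graph with n vertices and m ≥ 1 edges. If μ₁(G) < 4m/n, then G contains an odd cycle (equivalently, G is not bipartite). -/
/-!
A proper 2-colouring gives the vector `x = ±1`, with `xᵀ L x = ∑_{uv ∈ E} (x u - x v)² = 4m` and
`xᵀ x = n`; since `xᵀ L x ≤ μ₁ · xᵀ x`, a bipartite graph has `μ₁ ≥ 4m/n`.
-/

open Finset SimpleGraph

attribute [local instance] Classical.propDecidable

/-- The `i`-th largest value of the tuple `f` (values sorted in non-increasing order). -/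
noncomputable def sortDesc {n : ℕ} (f : Fin n → ℝ) : Fin n → ℝ :=
  fun i => f (Tuple.sort f i.rev)

/-- The Laplacian eigenvalues of `G`, in non-increasing order:
`lapEig G 0 = μ₁ ≥ lapEig G 1 = μ₂ ≥ ⋯`. -/
noncomputable def lapEig {n : ℕ} (G : SimpleGraph (Fin n)) : Fin n → ℝ :=
  sortDesc (SimpleGraph.posSemidef_lapMatrix ℝ G).isHermitian.eigenvalues

/-- The number of edges of `G`. -/
noncomputable def numEdges {n : ℕ} (G : SimpleGraph (Fin n)) : ℕ :=
  G.edgeFinset.card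

/-- The singular values of the LI-matrix `LI(G) = L(G) - (2m/n)·Iₙ`, in non-increasing
order; they are the values `|μᵢ - 2m/n|` sorted non-increasingly. -/
noncomputable def LIsv {n : ℕ} (G : SimpleGraph (Fin n)) : Fin n → ℝ :=
  sortDesc (fun i => |lapEig G i - 2 * numEdges G / n|)

/-- The Ky Fan `k`-norm of the LI-matrix of `G`: the sum of the `k` largest singular
values of `LI(G)`. -/
noncomputable def kyFanLI {n : ℕ} (G : SimpleGraph (Fin n)) (k : ℕ) : ℝ :=
  ∑ i ∈ Finset.univ.filter (fun i : Fin n => (i : ℕ) < k), LIsv G i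

/-- `S_k(L(G))`, the sum of the `k` largest Laplacian eigenvalues of `G`. -/
noncomputable def lapSum {n : ℕ} (G : SimpleGraph (Fin n)) (k : ℕ) : ℝ :=
  ∑ i ∈ Finset.univ.filter (fun i : Fin n => (i : ℕ) < k), lapEig G i

open Matrix

theorem le_sortDesc_zero {n : ℕ} (hn : 0 < n) (f : Fin n → ℝ) (i : Fin n) :
    f i ≤ sortDesc f ⟨0, hn⟩ := by
  rw [sortDesc, ← Equiv.apply_symm_apply (Tuple.sort f) i, ← Function.comp_apply (f := f)]
  refine Tuple.monotone_sort f ?_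
  simp only [Fin.le_def, Fin.val_rev]
  omega

open scoped MatrixOrder in
theorem Matrix.IsHermitian.dotProduct_mulVec_le_of_eigenvalues_le {ι : Type*} [Fintype ι]
    [DecidableEq ι] {A : Matrix ι ι ℝ} (hA : A.IsHermitian) {μ : ℝ}
    (h : ∀ i, hA.eigenvalues i ≤ μ) (x : ι → ℝ) :
    x ⬝ᵥ (A *ᵥ x) ≤ μ * (x ⬝ᵥ x) := by
  have hle : A ≤ algebraMap ℝ _ μ := le_algebraMap_of_spectrum_le (by
    rw [hA.spectrum_real_eq_range_eigenvalues]
    rintro _ ⟨i, rfl⟩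
    exact h i)
  simpa [Algebra.algebraMap_eq_smul_one, sub_mulVec, dotProduct_sub, smul_mulVec, dotProduct_smul]
    using (Matrix.le_iff.mp hle).dotProduct_mulVec_nonneg x

namespace SimpleGraph

variable {V : Type*} {G : SimpleGraph V}

theorem dotProduct_lapMatrix_mulVec_of_forall_adj [Fintype V] [DecidableEq V]
    [DecidableRel G.Adj] {x : V → ℝ} {c : ℝ} (hx : ∀ i j, G.Adj i j → (x i - x j) ^ 2 = c) :
    x ⬝ᵥ (G.lapMatrix ℝ *ᵥ x) = c * #G.edgeFinset := by
  have hsum : (∑ i, ∑ j, if G.Adj i j then (x i - x j) ^ 2 else 0) =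
      c * ∑ i, (G.degree i : ℝ) := by
    rw [mul_sum]
    refine sum_congr rfl fun i _ => ?_
    simp only [degree, neighborFinset_eq_filter, card_filter]
    push_cast
    rw [mul_sum]
    exact sum_congr rfl fun j _ => by split_ifs with h <;> simp [hx i j, h]
  rw [← toLinearMap₂'_apply', lapMatrix_toLinearMap₂', hsum, ← Nat.cast_sum,
    sum_degrees_eq_twice_card_edges]
  push_cast
  ring

noncomputable def Coloring.sign (C : G.Coloring (Fin 2)) (v : V) : ℝ :=
  (-1) ^ (C v : ℕ)

theorem Coloring.sq_sign_sub_sign (C : G.Coloring (Fin 2)) {u v : V} (h : G.Adj u v) :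
    (C.sign u - C.sign v) ^ 2 = 4 := by
  have hne := C.valid h
  simp only [sign]
  generalize C u = a, C v = b at hne
  revert hne
  fin_cases a <;> fin_cases b <;> norm_num

theorem Coloring.dotProduct_sign_self [Fintype V] (C : G.Coloring (Fin 2)) :
    C.sign ⬝ᵥ C.sign = Fintype.card V := by
  simp [dotProduct, sign, ← pow_add]

end SimpleGraph

theorem stmt_4_general {n : ℕ} (hn : 0 < n) (G : SimpleGraph (Fin n))
    (h : lapEig G ⟨0, hn⟩ < 4 * (numEdges G : ℝ) / n) :
    ¬ G.Colorable 2 := by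
  rintro ⟨C⟩
  have hquad := G.dotProduct_lapMatrix_mulVec_of_forall_adj fun _ _ => C.sq_sign_sub_sign
  have hrayleigh := (posSemidef_lapMatrix ℝ G).isHermitian.dotProduct_mulVec_le_of_eigenvalues_le
    (le_sortDesc_zero hn _) C.sign
  rw [hquad, C.dotProduct_sign_self, Fintype.card_fin] at hrayleigh
  rw [lt_div_iff₀ (by exact_mod_cast hn)] at h
  exact (h.trans_le hrayleigh).false

/-- If `G` is a simple graph with `n` vertices and `m ≥ 1` edges and
`μ₁(G) < 4m/n`, then `G` contains an odd cycle, i.e. `G` is not bipartite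
(not 2-colorable). -/
theorem stmt_4 {n : ℕ} (hn : 0 < n) (G : SimpleGraph (Fin n))
    (hm : 1 ≤ numEdges G) (h : lapEig G ⟨0, hn⟩ < 4 * (numEdges G : ℝ) / n) :
    ¬ G.Colorable 2 :=
  stmt_4_general hn G h
end

section
/- Let G be a connected simple graph on n ≥ 3 vertices with m edges. If σₙ₋₁(LI(G)) > σₙ(LI(G)), then σₙ(LI(G)) ≠ μ₁(G) − 2m/n, i.e. the smallest singular value of the LI-matrix is not attained by the largest Laplacian eigenvalue. -/
/-!
Write `c = 2m/n` for the mean of the Laplacian eigenvalues and `dᵢ = μᵢ - c`, so that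
`∑ dᵢ = 0` and `d₁ = max dᵢ`. If `σₙ = |d_k| = d₁` and every other `|dⱼ|` exceeds it, then
`dⱼ ≤ d₁ < |dⱼ|` forces `dⱼ < -d₁` for all `j ≠ k`, and the deviations sum to less than
`d₁ - (n - 1) d₁ ≤ 0`, which is impossible.
-/

open Finset SimpleGraph

attribute [local instance] Classical.propDecidable

theorem sum_sortDesc {n : ℕ} (f : Fin n → ℝ) : ∑ i, sortDesc f i = ∑ i, f i :=
  Equiv.sum_comp (Fin.revPerm.trans (Tuple.sort f)) f

theorem sortDesc_antitone {n : ℕ} (f : Fin n → ℝ) : Antitone (sortDesc f) :=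
  fun _ _ hij => Tuple.monotone_sort f (Fin.rev_le_rev.mpr hij)

theorem exists_sortDesc_last_eq_and_forall_ne_le {n : ℕ} (hn : 2 ≤ n) (f : Fin n → ℝ) :
    ∃ k, sortDesc f ⟨n - 1, by omega⟩ = f k ∧ ∀ j ≠ k, sortDesc f ⟨n - 2, by omega⟩ ≤ f j := by
  refine ⟨Tuple.sort f ⟨0, by omega⟩, congrArg (f ∘ Tuple.sort f) (Fin.ext (by simp; omega)), ?_⟩
  intro j hj
  obtain ⟨i, rfl⟩ := (Tuple.sort f).surjective j
  have hi : (⟨1, by omega⟩ : Fin n) ≤ i := by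
    rw [Fin.le_def, Nat.one_le_iff_ne_zero]
    exact fun h0 => hj (congrArg _ (Fin.ext h0))
  have hrev : (⟨n - 2, by omega⟩ : Fin n).rev = ⟨1, by omega⟩ := Fin.ext (by simp; omega)
  simp only [sortDesc, hrev]
  exact Tuple.monotone_sort f hi

theorem exists_ne_abs_le_of_sum_eq_zero {ι : Type*} [Fintype ι] [DecidableEq ι] [Nontrivial ι]
    (d : ι → ℝ) (hsum : ∑ j, d j = 0) (k : ι) (hle : ∀ j, d j ≤ |d k|) :
    ∃ j ≠ k, |d j| ≤ |d k| := by
  by_contra! hlt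
  have hneg : ∀ j ∈ univ.erase k, d j < -|d k| := fun j hj => by
    have := hlt j (ne_of_mem_erase hj)
    rcases abs_cases (d j) with ⟨h, _⟩ | ⟨h, _⟩ <;> linarith [hle j]
  have hcard : 1 ≤ #(univ.erase k) := by
    rw [card_erase_of_mem (mem_univ k), card_univ]
    have := Fintype.one_lt_card (α := ι)
    omega
  have hrest : ∑ j ∈ univ.erase k, d j < -|d k| := calc
    ∑ j ∈ univ.erase k, d j < ∑ _j ∈ univ.erase k, -|d k| :=
      sum_lt_sum_of_nonempty (card_pos.mp hcard) hneg
    _ = #(univ.erase k) * -|d k| := by rw [sum_const, nsmul_eq_mul]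
    _ ≤ -|d k| := by nlinarith [abs_nonneg (d k), (Nat.one_le_cast (α := ℝ)).mpr hcard]
  rw [← add_sum_erase _ _ (mem_univ k)] at hsum
  linarith [le_abs_self (d k)]

theorem sum_lapEig {n : ℕ} (G : SimpleGraph (Fin n)) : ∑ i, lapEig G i = 2 * numEdges G := by
  have htrace : (G.lapMatrix ℝ).trace = ∑ i, (G.degree i : ℝ) := by
    simp [lapMatrix, degMatrix, Matrix.trace]
  have heig := (posSemidef_lapMatrix ℝ G).isHermitian.trace_eq_sum_eigenvalues
  simp only [RCLike.ofReal_real_eq_id, id] at heig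
  rw [lapEig, sum_sortDesc, ← heig, htrace, ← Nat.cast_sum, sum_degrees_eq_twice_card_edges,
    numEdges]
  push_cast
  rfl

/-- If `G` is a connected simple graph on `n ≥ 3` vertices with `m` edges
and `σₙ₋₁(LI(G)) > σₙ(LI(G))`, then `σₙ(LI(G)) ≠ μ₁(G) - 2m/n`. -/
theorem stmt_6 {n : ℕ} (hn : 3 ≤ n) (G : SimpleGraph (Fin n))
    (h : LIsv G ⟨n - 1, by omega⟩ < LIsv G ⟨n - 2, by omega⟩) :
    LIsv G ⟨n - 1, by omega⟩ ≠ lapEig G ⟨0, by omega⟩ - 2 * (numEdges G : ℝ) / n := by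
  intro heq
  have : Nontrivial (Fin n) := Fin.nontrivial_iff_two_le.mpr (by omega)
  set d : Fin n → ℝ := fun i => lapEig G i - 2 * numEdges G / n
  obtain ⟨k, hk, hsecond⟩ := exists_sortDesc_last_eq_and_forall_ne_le (by omega) (|d ·|)
  have hsum : ∑ j, d j = 0 := by
    simp only [d, sum_sub_distrib, sum_lapEig, sum_const, card_univ, Fintype.card_fin,
      nsmul_eq_mul]
    field_simp
    ring
  have hk' : LIsv G ⟨n - 1, by omega⟩ = |d k| := hk
  have hle : ∀ j, d j ≤ |d k| := fun j => by
    rw [← hk', heq]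
    exact sub_le_sub_right (sortDesc_antitone _ (Nat.zero_le j.val)) _
  obtain ⟨j, hjk, hj⟩ := exists_ne_abs_le_of_sum_eq_zero d hsum k hle
  exact (h.trans_le (hsecond j hjk)).not_ge (hk' ▸ hj)
end
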